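/- Let (X,T) be a topological dynamical system with X compact, and let c_S^n = 2^{-n}. Then sup_𝒰 Asc(X,𝒰,T) = h_top(X,T), where the supremum is over all finite open covers 𝒰 of X. Moreover sup_𝒰 Int(X,𝒰,T) = h_top(X,T). -/

import Mathlib

/-!
`Asc(𝒰) ≤ h(𝒰)` because `N(𝒰_S) ≤ N(𝒰_{[0,n)})` for `S ⊆ [0,n)`; hence also
`Int(𝒰) = 2 Asc(𝒰) - h(𝒰) ≤ h(𝒰)`. Conversely, the join over `S` of the refined cover
`𝒰_{[0,k)}` has the same minimal subcover size as `𝒰_{S + [0,k)}`. For a random `S ⊆ [0,n)`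
the thickened set `S + [0,k)` misses on average at most `n / 2^k + 1` points of `[0,n)`, each
costing at most `log N(𝒰)`, so `Asc(𝒰_{[0,k)}) ≥ h(𝒰) - 3 log N(𝒰) / k` while
`h(𝒰_{[0,k)}) ≤ h(𝒰)`. Apart from the identity for refined covers, only four properties of
`S ↦ log N(𝒰_S)` enter: it is nonnegative, monotone, subadditive and does not increase under
shifts (`IsShiftSubadditive`).
-/

/-- Minimal cardinality of a finite subcover of the family `U` covering all of `X`. -/
noncomputable def coverN {X : Type*} (U : Set (Set X)) : ℕ :=
  sInf {m : ℕ | ∃ V : Finset (Set X),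
    ↑V ⊆ U ∧ V.card = m ∧ ⋃₀ (V : Set (Set X)) = Set.univ}

/-- The join `𝒰_S = ⋁_{i ∈ S} T^{-i} 𝒰`. -/
def coverJoin {X : Type*} (T : X → X) (U : Set (Set X)) (S : Finset ℕ) : Set (Set X) :=
  {A | ∃ f : ℕ → Set X, (∀ i ∈ S, f i ∈ U) ∧ A = ⋂ i ∈ S, T^[i] ⁻¹' f i}

/-- Topological average sample complexity of `T` with respect to the cover `U`,
with uniform coefficients `c_S^n = 2^{-n}` (the limit equals the infimum by
subadditivity). -/
noncomputable def ascVal {X : Type*} (T : X → X) (U : Set (Set X)) : ℝ :=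
  ⨅ n : ℕ+, (2 ^ (n : ℕ) : ℝ)⁻¹ *
    (∑ S ∈ (Finset.range (n : ℕ)).powerset,
      Real.log (coverN (coverJoin T U S))) / (n : ℕ)

/-- Topological entropy of `T` relative to the cover `U` (the limit equals the
infimum by Fekete's lemma). -/
noncomputable def covEnt {X : Type*} (T : X → X) (U : Set (Set X)) : ℝ :=
  ⨅ n : ℕ+, Real.log (coverN (coverJoin T U (Finset.range (n : ℕ)))) / (n : ℕ)

open Finset Pointwise Filter

theorem log_natCast_le_log_natCast {a b : ℕ} (hab : a ≤ b) : Real.log a ≤ Real.log b := by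
  rcases Nat.eq_zero_or_pos a with rfl | ha
  · simpa using Real.log_natCast_nonneg b
  · exact Real.log_le_log (by exact_mod_cast ha) (by exact_mod_cast hab)

theorem log_natCast_le_add_of_le_mul {a b c : ℕ} (habc : a ≤ b * c) :
    Real.log a ≤ Real.log b + Real.log c := by
  rcases Nat.eq_zero_or_pos b with rfl | hb
  · simp_all [Real.log_natCast_nonneg]
  rcases Nat.eq_zero_or_pos c with rfl | hc
  · simp_all [Real.log_natCast_nonneg]
  rw [← Real.log_mul (by positivity) (by positivity)]
  exact_mod_cast log_natCast_le_log_natCast habc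

theorem iSup_eq_iSup_of_le_of_forall_sub_le {ι : Type*} [Nonempty ι] {f g : ι → ℝ}
    (hfg : ∀ i, f i ≤ g i) (happrox : ∀ i, ∀ ε > 0, ∃ j, g i - ε ≤ f j) :
    ⨆ i, f i = ⨆ i, g i := by
  by_cases hg : BddAbove (Set.range g)
  · have hf : BddAbove (Set.range f) := by
      obtain ⟨b, hb⟩ := hg
      exact ⟨b, Set.forall_mem_range.2 fun i => (hfg i).trans (hb (Set.mem_range_self i))⟩
    refine le_antisymm (ciSup_mono hg hfg)
      (ciSup_le fun i => le_of_forall_pos_le_add fun ε hε => ?_)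
    obtain ⟨j, hj⟩ := happrox i ε hε
    linarith [le_ciSup hf j]
  · -- Then `f` is unbounded as well, and both suprema take the junk value `0`.
    have hf : ¬BddAbove (Set.range f) := by
      rintro ⟨b, hb⟩
      refine hg ⟨b + 1, Set.forall_mem_range.2 fun i => ?_⟩
      obtain ⟨j, hj⟩ := happrox i 1 one_pos
      linarith [hb (Set.mem_range_self j)]
    rw [Real.iSup_of_not_bddAbove hg, Real.iSup_of_not_bddAbove hf]

structure IsShiftSubadditive (φ : Finset ℕ → ℝ) : Prop where
  nonneg : ∀ S, 0 ≤ φ S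
  mono : Monotone φ
  union_le : ∀ S S', φ (S ∪ S') ≤ φ S + φ S'
  map_add_le : ∀ S t, φ (S.map (addLeftEmbedding t)) ≤ φ S

noncomputable def entropyOf (φ : Finset ℕ → ℝ) : ℝ :=
  ⨅ n : ℕ+, φ (range (n : ℕ)) / (n : ℕ)

noncomputable def ascOf (φ : Finset ℕ → ℝ) : ℝ :=
  ⨅ n : ℕ+, (2 ^ (n : ℕ) : ℝ)⁻¹ *
    (∑ S ∈ (range (n : ℕ)).powerset, φ S) / (n : ℕ)

def thicken (φ : Finset ℕ → ℝ) (k : ℕ) (S : Finset ℕ) : ℝ := φ (S + range k)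

theorem entropyOf_le_div {φ : Finset ℕ → ℝ} (hφ : ∀ S, 0 ≤ φ S) (n : ℕ+) :
    entropyOf φ ≤ φ (range n) / n :=
  ciInf_le ⟨0, by rintro _ ⟨m, rfl⟩; exact div_nonneg (hφ _) m.val.cast_nonneg⟩ n

theorem range_add_range_subset (a k : ℕ) : range a + range k ⊆ range (a + k) := by
  intro m hm
  obtain ⟨i, hi, j, hj, rfl⟩ := mem_add.1 hm
  simp only [mem_range] at hi hj ⊢
  omega

/-- A point `m < n` is missed by `S + [0,k)` iff `S` avoids `[m + 1 - k, m]`, which has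
`min (m + 1) k` elements. -/
theorem card_filter_notMem_add_range_le {n m : ℕ} (hm : m < n) (k : ℕ) :
    #{S ∈ (range n).powerset | m ∉ S + range k} ≤ 2 ^ (n - min (m + 1) k) := by
  have hW : Icc (m + 1 - k) m ⊆ range n := fun i hi => by
    simp only [mem_Icc, mem_range] at hi ⊢; omega
  calc #{S ∈ (range n).powerset | m ∉ S + range k}
      ≤ #(range n \ Icc (m + 1 - k) m).powerset := by
        refine card_le_card fun S hS => ?_
        simp only [mem_filter, mem_powerset] at hS ⊢
        refine fun i hi => mem_sdiff.2 ⟨hS.1 hi, fun hiW => hS.2 (mem_add.2 ?_)⟩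
        simp only [mem_Icc] at hiW
        exact ⟨i, hi, m - i, mem_range.2 (by omega), by omega⟩
    _ = 2 ^ (n - min (m + 1) k) := by
        rw [card_powerset, card_sdiff_of_subset hW, card_range, Nat.card_Icc]
        congr 2
        omega

theorem sum_card_sdiff_add_range_le (n k : ℕ) :
    ∑ S ∈ (range n).powerset, (#(range n \ (S + range k)) : ℝ) ≤
      2 ^ n * (n / 2 ^ k + 1) := by
  have hcount : ∀ m ∈ range n, (#{S ∈ (range n).powerset | m ∉ S + range k} : ℝ) ≤
      2 ^ n * (1 / 2 ^ k + (1 / 2) ^ m / 2) := by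
    intro m hm
    have hm : m < n := mem_range.1 hm
    refine (Nat.cast_le.2 (card_filter_notMem_add_range_le hm k)).trans ?_
    rw [Nat.cast_pow, Nat.cast_two, pow_sub₀ _ two_ne_zero (by omega)]
    have hgeom : ((2 : ℝ) ^ (m + 1))⁻¹ = (1 / 2) ^ m / 2 := by
      rw [pow_succ, one_div_pow, mul_inv, div_eq_mul_inv, one_div]
    refine mul_le_mul_of_nonneg_left ?_ (by positivity)
    rcases le_total (m + 1) k with h | h
    · rw [min_eq_left h, hgeom]
      exact le_add_of_nonneg_left (by positivity)
    · rw [min_eq_right h, ← one_div]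
      exact le_add_of_nonneg_right (by positivity)
  calc ∑ S ∈ (range n).powerset, (#(range n \ (S + range k)) : ℝ)
      = ∑ m ∈ range n, (#{S ∈ (range n).powerset | m ∉ S + range k} : ℝ) := by
        simp only [sdiff_eq_filter, card_filter, Nat.cast_sum, Nat.cast_ite, Nat.cast_one,
          Nat.cast_zero]
        rw [sum_comm]
    _ ≤ ∑ m ∈ range n, 2 ^ n * (1 / 2 ^ k + (1 / 2) ^ m / 2) := sum_le_sum hcount
    _ = 2 ^ n * (n / 2 ^ k + (∑ m ∈ range n, (1 / 2 : ℝ) ^ m) / 2) := by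
        rw [← mul_sum, sum_add_distrib, ← sum_div]
        simp [div_eq_mul_inv, sum_mul]
    _ ≤ 2 ^ n * (n / 2 ^ k + 1) := by
        have := sum_geometric_two_le n
        gcongr
        linarith

namespace IsShiftSubadditive

variable {φ : Finset ℕ → ℝ}

theorem entropyOf_nonneg (hφ : IsShiftSubadditive φ) : 0 ≤ entropyOf φ :=
  le_ciInf fun n => div_nonneg (hφ.nonneg _) n.val.cast_nonneg

theorem mul_entropyOf_le (hφ : IsShiftSubadditive φ) {n : ℕ} (hn : 0 < n) :
    n * entropyOf φ ≤ φ (range n) := by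
  have h := entropyOf_le_div hφ.nonneg ⟨n, hn⟩
  rwa [PNat.mk_coe, le_div_iff₀ (by exact_mod_cast hn), mul_comm] at h

theorem ascOf_le_entropyOf (hφ : IsShiftSubadditive φ) : ascOf φ ≤ entropyOf φ := by
  refine ciInf_mono ⟨0, ?_⟩ fun n => ?_
  · rintro _ ⟨n, rfl⟩
    have := sum_nonneg fun S (_ : S ∈ (range (n : ℕ)).powerset) => hφ.nonneg S
    positivity
  · have hsum : ∑ S ∈ (range (n : ℕ)).powerset, φ S ≤ 2 ^ (n : ℕ) * φ (range n) := by
      calc ∑ S ∈ (range (n : ℕ)).powerset, φ S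
          ≤ ∑ _S ∈ (range (n : ℕ)).powerset, φ (range n) :=
            sum_le_sum fun S hS => hφ.mono (mem_powerset.1 hS)
        _ = 2 ^ (n : ℕ) * φ (range n) := by simp
    calc (2 ^ (n : ℕ) : ℝ)⁻¹ * (∑ S ∈ (range (n : ℕ)).powerset, φ S) / (n : ℕ)
        ≤ (2 ^ (n : ℕ) : ℝ)⁻¹ * (2 ^ (n : ℕ) * φ (range n)) / (n : ℕ) := by gcongr
      _ = φ (range n) / n := by field_simp

theorem singleton_le (hφ : IsShiftSubadditive φ) (i : ℕ) : φ {i} ≤ φ {0} := by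
  simpa using hφ.map_add_le {0} i

theorem union_le_add_card_mul (hφ : IsShiftSubadditive φ) (A B : Finset ℕ) :
    φ (A ∪ B) ≤ φ A + #B * φ {0} := by
  induction B using Finset.induction_on with
  | empty => simp
  | insert i B hi ih =>
    calc φ (A ∪ insert i B) = φ ((A ∪ B) ∪ {i}) := by
          rw [union_assoc, union_comm B, ← insert_eq]
      _ ≤ φ (A ∪ B) + φ {i} := hφ.union_le _ _
      _ ≤ φ A + #(insert i B) * φ {0} := by
          rw [card_insert_of_notMem hi]
          push_cast
          linarith [hφ.singleton_le i]

theorem range_mul_le (hφ : IsShiftSubadditive φ) (n m : ℕ) :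
    φ (range (n * (m + 1))) ≤ (m + 1) * φ (range n) := by
  induction m with
  | zero => simp
  | succ m ih =>
    calc φ (range (n * (m + 1 + 1)))
        = φ (range (n * (m + 1)) ∪ (range n).map (addLeftEmbedding (n * (m + 1)))) := by
          rw [← range_add_eq_union, mul_add_one]
      _ ≤ φ (range (n * (m + 1))) + φ (range n) :=
          (hφ.union_le _ _).trans (add_le_add_right (hφ.map_add_le _ _) _)
      _ ≤ (↑(m + 1) + 1) * φ (range n) := by push_cast; linarith

theorem thicken_range_le (hφ : IsShiftSubadditive φ) (a k : ℕ) :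
    thicken φ k (range a) ≤ φ (range a) + k * φ {0} := by
  calc thicken φ k (range a) ≤ φ (range (a + k)) := hφ.mono (range_add_range_subset a k)
    _ ≤ φ (range a) + k * φ {0} := by
      simpa [range_add_eq_union] using hφ.union_le_add_card_mul (range a)
        ((range k).map (addLeftEmbedding a))

/-- `φ([0,nm) + [0,k)) ≤ m φ([0,n)) + k φ{0}`, and the second term vanishes after dividing
by `nm` and letting `m → ∞`. -/
theorem entropyOf_thicken_le (hφ : IsShiftSubadditive φ) (k : ℕ) :
    entropyOf (thicken φ k) ≤ entropyOf φ := by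
  refine le_ciInf fun n => ?_
  have hn : (0 : ℝ) < (n : ℕ) := by exact_mod_cast n.pos
  have hbound : ∀ m : ℕ, entropyOf (thicken φ k) ≤
      φ (range n) / n + k * φ {0} / n * (1 / ((m : ℝ) + 1)) := by
    intro m
    have hnm : 0 < (n : ℕ) * (m + 1) := by positivity
    calc entropyOf (thicken φ k)
        ≤ thicken φ k (range ((n : ℕ) * (m + 1))) / ((n : ℕ) * (m + 1) : ℕ) :=
          entropyOf_le_div (fun S => hφ.nonneg _) ⟨_, hnm⟩
      _ ≤ ((m + 1) * φ (range n) + k * φ {0}) / ((n : ℕ) * (m + 1) : ℕ) := by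
          gcongr
          linarith [hφ.thicken_range_le ((n : ℕ) * (m + 1)) k, hφ.range_mul_le n m]
      _ = φ (range n) / n + k * φ {0} / n * (1 / ((m : ℝ) + 1)) := by
          push_cast
          field_simp
  refine ge_of_tendsto' (x := atTop) ?_ hbound
  simpa using tendsto_const_nhds.add
    ((tendsto_one_div_add_atTop_nhds_zero_nat (𝕜 := ℝ)).const_mul (k * φ {0} / n))

theorem pow_mul_le_sum_thicken (hφ : IsShiftSubadditive φ) (n k : ℕ) :
    2 ^ n * φ (range k) ≤ ∑ S ∈ (range (n + 1)).powerset, thicken φ k S := by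
  rw [range_add_one', sum_powerset_insert (by simp)]
  refine le_add_of_nonneg_of_le (sum_nonneg fun S _ => hφ.nonneg _) ?_
  calc 2 ^ n * φ (range k) = ∑ _S ∈ ((range n).map _).powerset, φ (range k) := by simp
    _ ≤ _ := sum_le_sum fun S _ => hφ.mono fun j hj =>
          mem_add.2 ⟨0, mem_insert_self 0 S, j, hj, zero_add j⟩

theorem le_thicken_add_card_sdiff_mul (hφ : IsShiftSubadditive φ) (S : Finset ℕ) (n k : ℕ) :
    φ (range n) ≤ thicken φ k S + #(range n \ (S + range k)) * φ {0} :=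
  (hφ.mono fun m hm => by by_cases h : m ∈ S + range k <;> simp [h, hm]).trans
    (hφ.union_le_add_card_mul _ _)

/-- For `n ≤ k / 2` use only the sets `S ∋ 0`: they form half of the powerset of `[0,n)`, and
`S + [0,k) ⊇ [0,k)`. -/
theorem entropyOf_le_avg_thicken_of_two_mul_le (hφ : IsShiftSubadditive φ) {n k : ℕ}
    (hn : 0 < n) (hnk : 2 * n ≤ k) :
    entropyOf φ ≤ (2 ^ n : ℝ)⁻¹ * (∑ S ∈ (range n).powerset, thicken φ k S) / n := by
  obtain ⟨n, rfl⟩ : ∃ n', n = n' + 1 := ⟨n - 1, by omega⟩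
  set h := entropyOf φ
  have hh : 0 ≤ h := hφ.entropyOf_nonneg
  have hkh : k * h ≤ φ (range k) := hφ.mul_entropyOf_le (by omega)
  have hk : (2 * (n + 1) : ℝ) ≤ k := by exact_mod_cast hnk
  calc h ≤ k * h / (2 * (n + 1)) := by
        rw [le_div_iff₀ (by positivity)]
        nlinarith
    _ = (2 ^ (n + 1) : ℝ)⁻¹ * (2 ^ n * (k * h)) / ↑(n + 1) := by
        push_cast
        field_simp
        ring
    _ ≤ (2 ^ (n + 1) : ℝ)⁻¹ * (∑ S ∈ (range (n + 1)).powerset, thicken φ k S) /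
          ↑(n + 1) := by
        gcongr
        exact (mul_le_mul_of_nonneg_left hkh (by positivity)).trans
          (hφ.pow_mul_le_sum_thicken n k)

theorem entropyOf_sub_le_avg_thicken (hφ : IsShiftSubadditive φ) {n : ℕ} (hn : 0 < n)
    (k : ℕ) :
    entropyOf φ - φ {0} / 2 ^ k - φ {0} / n ≤
      (2 ^ n : ℝ)⁻¹ * (∑ S ∈ (range n).powerset, thicken φ k S) / n := by
  set h := entropyOf φ
  set L := φ {0}
  have hsum : 2 ^ n * (n * h) - L * (2 ^ n * (n / 2 ^ k + 1)) ≤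
      ∑ S ∈ (range n).powerset, thicken φ k S := by
    calc 2 ^ n * (n * h) - L * (2 ^ n * (n / 2 ^ k + 1))
        ≤ ∑ S ∈ (range n).powerset, (φ (range n) - #(range n \ (S + range k)) * L) := by
          rw [sum_sub_distrib, ← sum_mul, sum_const, card_powerset, card_range, nsmul_eq_mul]
          push_cast
          nlinarith [hφ.mul_entropyOf_le hn, sum_card_sdiff_add_range_le n k, hφ.nonneg {0},
            pow_pos (two_pos (α := ℝ)) n]
      _ ≤ ∑ S ∈ (range n).powerset, thicken φ k S :=
          sum_le_sum fun S _ => by linarith [hφ.le_thicken_add_card_sdiff_mul S n k]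
  have hn' : (0 : ℝ) < n := by exact_mod_cast hn
  calc h - L / 2 ^ k - L / n
      = (2 ^ n : ℝ)⁻¹ * (2 ^ n * (n * h) - L * (2 ^ n * (n / 2 ^ k + 1))) / n := by
        field_simp
        ring
    _ ≤ _ := by gcongr

theorem entropyOf_sub_le_ascOf_thicken (hφ : IsShiftSubadditive φ) {k : ℕ} (hk : 0 < k) :
    entropyOf φ - 3 * φ {0} / k ≤ ascOf (thicken φ k) := by
  have hL := hφ.nonneg {0}
  have hk' : (0 : ℝ) < k := by exact_mod_cast hk
  refine le_ciInf fun n => ?_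
  rcases le_or_gt (2 * (n : ℕ)) k with hnk | hkn
  · have := hφ.entropyOf_le_avg_thicken_of_two_mul_le n.pos hnk
    have : 0 ≤ 3 * φ {0} / k := by positivity
    linarith
  · have h2k : φ {0} / 2 ^ k ≤ φ {0} / k :=
      div_le_div_of_nonneg_left hL hk' (by exact_mod_cast Nat.lt_two_pow_self.le)
    have hkn' : (k : ℝ) < 2 * (n : ℕ) := by exact_mod_cast hkn
    have hn : φ {0} / (n : ℕ) ≤ 2 * φ {0} / k := by
      rw [div_le_div_iff₀ (by positivity) hk']
      nlinarith
    have := hφ.entropyOf_sub_le_avg_thicken n.pos k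
    linarith [show 3 * φ {0} / k = φ {0} / k + 2 * φ {0} / k by ring]

end IsShiftSubadditive

section Covers

open Set

variable {X : Type*} {T : X → X} {U : Set (Set X)}

theorem coverN_le_card (V : Finset (Set X)) (hVU : ↑V ⊆ U)
    (hV : ⋃₀ (V : Set (Set X)) = univ) : coverN U ≤ #V :=
  Nat.sInf_le ⟨V, hVU, rfl, hV⟩

theorem coverN_le_card_of_refines {W : Set (Set X)} (V : Finset (Set X))
    (hV : ⋃₀ (V : Set (Set X)) = univ) (hVW : ∀ A ∈ V, ∃ B ∈ W, A ⊆ B) :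
    coverN W ≤ #V := by
  classical
  choose! g hgW hg using hVW
  refine (coverN_le_card (V.image g) (by simpa [Set.subset_def] using hgW) ?_).trans
    card_image_le
  refine eq_univ_of_forall fun x => ?_
  obtain ⟨A, hA, hxA⟩ := mem_sUnion.1 (hV ▸ mem_univ x)
  exact mem_sUnion.2 ⟨g A, by simpa using ⟨A, hA, rfl⟩, hg A hA hxA⟩

theorem sUnion_coverJoin (hc : ⋃₀ U = univ) (S : Finset ℕ) :
    ⋃₀ coverJoin T U S = univ := by
  refine eq_univ_of_forall fun x => ?_
  choose g hgU hg using fun y : X => mem_sUnion.1 (hc ▸ mem_univ y)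
  exact mem_sUnion.2 ⟨_, ⟨fun i => g (T^[i] x), fun i _ => hgU _, rfl⟩,
    mem_iInter₂.2 fun i _ => hg _⟩

theorem coverJoin_finite (hU : U.Finite) (S : Finset ℕ) : (coverJoin T U S).Finite := by
  have := hU.to_subtype
  refine (finite_range fun g : S → U => ⋂ i : S, T^[i] ⁻¹' (g i : Set X)).subset ?_
  rintro _ ⟨f, hf, rfl⟩
  exact ⟨fun i => ⟨f i, hf i i.2⟩, by ext; simp⟩

variable [TopologicalSpace X]

theorem isOpen_of_mem_coverJoin (hT : Continuous T) (hO : ∀ A ∈ U, IsOpen A)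
    {S : Finset ℕ} : ∀ A ∈ coverJoin T U S, IsOpen A := by
  rintro A ⟨f, hf, rfl⟩
  exact isOpen_biInter_finset fun i hi => (hO _ (hf i hi)).preimage (hT.iterate i)

variable [CompactSpace X]

theorem exists_finset_card_eq_coverN (hO : ∀ A ∈ U, IsOpen A) (hc : ⋃₀ U = univ) :
    ∃ V : Finset (Set X), ↑V ⊆ U ∧ #V = coverN U ∧ ⋃₀ (V : Set (Set X)) = univ := by
  obtain ⟨V, hVU, hV, hcov⟩ := isCompact_univ.elim_finite_subcover_image (c := id) hO
    (by simp [← sUnion_eq_biUnion, hc])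
  have hne : {m : ℕ | ∃ V : Finset (Set X),
      ↑V ⊆ U ∧ #V = m ∧ ⋃₀ (V : Set (Set X)) = univ}.Nonempty :=
    ⟨_, hV.toFinset, by simpa using hVU, rfl,
      univ_subset_iff.1 (by simpa [sUnion_eq_biUnion] using hcov)⟩
  exact Nat.sInf_mem hne

theorem coverN_le_of_refines {V W : Set (Set X)} (hO : ∀ A ∈ V, IsOpen A) (hc : ⋃₀ V = univ)
    (hVW : ∀ A ∈ V, ∃ B ∈ W, A ⊆ B) : coverN W ≤ coverN V := by
  obtain ⟨V₀, hV₀, hcard, hcov⟩ := exists_finset_card_eq_coverN hO hc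
  exact hcard ▸ coverN_le_card_of_refines V₀ hcov fun A hA => hVW A (hV₀ hA)

theorem exists_finset_card_eq_coverN_coverJoin (hT : Continuous T) (hO : ∀ A ∈ U, IsOpen A)
    (hc : ⋃₀ U = univ) (S : Finset ℕ) :
    ∃ V : Finset (Set X), ↑V ⊆ coverJoin T U S ∧ #V = coverN (coverJoin T U S) ∧
      ⋃₀ (V : Set (Set X)) = univ :=
  exists_finset_card_eq_coverN (isOpen_of_mem_coverJoin hT hO) (sUnion_coverJoin hc S)

theorem coverN_coverJoin_mono (hT : Continuous T) (hO : ∀ A ∈ U, IsOpen A)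
    (hc : ⋃₀ U = univ) {S S' : Finset ℕ} (hSS' : S ⊆ S') :
    coverN (coverJoin T U S) ≤ coverN (coverJoin T U S') := by
  refine coverN_le_of_refines (isOpen_of_mem_coverJoin hT hO) (sUnion_coverJoin hc S') ?_
  rintro _ ⟨f, hf, rfl⟩
  exact ⟨_, ⟨f, fun i hi => hf i (hSS' hi), rfl⟩,
    biInter_subset_biInter_left fun i hi => hSS' hi⟩

theorem coverN_coverJoin_union_le (hT : Continuous T) (hO : ∀ A ∈ U, IsOpen A)
    (hc : ⋃₀ U = univ) (S S' : Finset ℕ) :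
    coverN (coverJoin T U (S ∪ S')) ≤ coverN (coverJoin T U S) * coverN (coverJoin T U S') := by
  classical
  obtain ⟨V, hVU, hV, hVcov⟩ := exists_finset_card_eq_coverN_coverJoin hT hO hc S
  obtain ⟨V', hVU', hV', hVcov'⟩ := exists_finset_card_eq_coverN_coverJoin hT hO hc S'
  rw [← hV, ← hV']
  refine (coverN_le_card_of_refines (image₂ (· ∩ ·) V V') ?_ ?_).trans
    (card_image₂_le _ _ _)
  · refine eq_univ_of_forall fun x => ?_
    obtain ⟨A, hA, hxA⟩ := mem_sUnion.1 (hVcov ▸ mem_univ x)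
    obtain ⟨A', hA', hxA'⟩ := mem_sUnion.1 (hVcov' ▸ mem_univ x)
    exact mem_sUnion.2 ⟨A ∩ A', mem_image₂_of_mem hA hA', hxA, hxA'⟩
  · simp only [mem_image₂]
    rintro _ ⟨_, hA, _, hA', rfl⟩
    obtain ⟨f, hf, rfl⟩ := hVU hA
    obtain ⟨f', hf', rfl⟩ := hVU' hA'
    refine ⟨_, ⟨fun i => if i ∈ S then f i else f' i, fun i hi => ?_, rfl⟩,
      fun x hx => ?_⟩
    · dsimp only
      split_ifs with h
      · exact hf i h
      · exact hf' i ((Finset.mem_union.1 hi).resolve_left h)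
    · simp only [mem_inter_iff, mem_iInter₂, Set.mem_preimage] at hx ⊢
      intro i hi
      split_ifs with h
      · exact hx.1 i h
      · exact hx.2 i ((Finset.mem_union.1 hi).resolve_left h)

theorem coverN_coverJoin_map_add_le (hT : Continuous T) (hO : ∀ A ∈ U, IsOpen A)
    (hc : ⋃₀ U = univ) (S : Finset ℕ) (t : ℕ) :
    coverN (coverJoin T U (S.map (addLeftEmbedding t))) ≤ coverN (coverJoin T U S) := by
  classical
  obtain ⟨V, hVU, hV, hVcov⟩ := exists_finset_card_eq_coverN_coverJoin hT hO hc S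
  rw [← hV]
  refine (coverN_le_card_of_refines (V.image (T^[t] ⁻¹' ·)) ?_ ?_).trans card_image_le
  · refine eq_univ_of_forall fun x => ?_
    obtain ⟨A, hA, hxA⟩ := mem_sUnion.1 (hVcov ▸ mem_univ (T^[t] x))
    exact mem_sUnion.2 ⟨_, mem_image_of_mem _ hA, hxA⟩
  · simp only [Finset.mem_image]
    rintro _ ⟨_, hA, rfl⟩
    obtain ⟨f, hf, rfl⟩ := hVU hA
    refine ⟨_, ⟨fun m => f (m - t), fun m hm => ?_, rfl⟩, fun x hx => ?_⟩
    · obtain ⟨i, hi, rfl⟩ := Finset.mem_map.1 hm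
      simpa using hf i hi
    · simp only [Set.mem_preimage, mem_iInter₂] at hx ⊢
      intro m hm
      obtain ⟨i, hi, rfl⟩ := Finset.mem_map.1 hm
      simpa [add_comm t i, Function.iterate_add_apply] using hx i hi

/-- The join over `S` of the refined cover `𝒰_{[0,k)}` and the join `𝒰_{S + [0,k)}` refine
each other, although they differ as families of sets. -/
theorem coverN_coverJoin_coverJoin_range (hT : Continuous T) (hO : ∀ A ∈ U, IsOpen A)
    (hc : ⋃₀ U = univ) (k : ℕ) (S : Finset ℕ) :
    coverN (coverJoin T (coverJoin T U (range k)) S) = coverN (coverJoin T U (S + range k)) := by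
  classical
  apply le_antisymm
  · refine coverN_le_of_refines (isOpen_of_mem_coverJoin hT hO) (sUnion_coverJoin hc _) ?_
    rintro _ ⟨g, hg, rfl⟩
    have hgU : ∀ i ∈ S, ∀ j ∈ range k, g (i + j) ∈ U := fun i hi j hj =>
      hg _ (mem_add.2 ⟨i, hi, j, hj, rfl⟩)
    refine ⟨_, ⟨fun i => ⋂ j ∈ range k, T^[j] ⁻¹' g (i + j),
      fun i hi => ⟨fun j => g (i + j), hgU i hi, rfl⟩, rfl⟩, fun x hx => ?_⟩
    simp only [mem_iInter₂, Set.mem_preimage] at hx ⊢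
    intro i hi j hj
    rw [← Function.iterate_add_apply, add_comm j i]
    exact hx _ (mem_add.2 ⟨i, hi, j, hj, rfl⟩)
  · refine coverN_le_of_refines (isOpen_of_mem_coverJoin hT (isOpen_of_mem_coverJoin hT hO))
      (sUnion_coverJoin (sUnion_coverJoin hc _) _) ?_
    rintro _ ⟨f, hf, rfl⟩
    choose! g hgU hfg using hf
    choose! a ha b hb hab using fun m (hm : m ∈ S + range k) => mem_add.1 hm
    refine ⟨_, ⟨fun m => g (a m) (b m), fun m hm => hgU _ (ha m hm) _ (hb m hm), rfl⟩,
      fun x hx => ?_⟩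
    simp only [mem_iInter₂, Set.mem_preimage] at hx ⊢
    intro m hm
    have hxm := hx _ (ha m hm)
    rw [hfg _ (ha m hm)] at hxm
    simp only [mem_iInter₂, Set.mem_preimage] at hxm
    have hTm : T^[m] x = T^[b m] (T^[a m] x) := by
      rw [← Function.iterate_add_apply, add_comm, hab m hm]
    exact hTm ▸ hxm _ (hb m hm)

end Covers

noncomputable def logCoverNJoin {X : Type*} (T : X → X) (U : Set (Set X)) (S : Finset ℕ) :
    ℝ :=
  Real.log (coverN (coverJoin T U S))

section LogCoverNJoin

variable {X : Type*} {T : X → X} {U : Set (Set X)}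

theorem covEnt_eq_entropyOf : covEnt T U = entropyOf (logCoverNJoin T U) := rfl

theorem ascVal_eq_ascOf : ascVal T U = ascOf (logCoverNJoin T U) := rfl

variable [TopologicalSpace X] [CompactSpace X]

theorem isShiftSubadditive_logCoverNJoin (hT : Continuous T) (hO : ∀ A ∈ U, IsOpen A)
    (hc : ⋃₀ U = Set.univ) : IsShiftSubadditive (logCoverNJoin T U) where
  nonneg _ := Real.log_natCast_nonneg _
  mono _ _ h := log_natCast_le_log_natCast (coverN_coverJoin_mono hT hO hc h)
  union_le S S' := log_natCast_le_add_of_le_mul (coverN_coverJoin_union_le hT hO hc S S')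
  map_add_le S t := log_natCast_le_log_natCast (coverN_coverJoin_map_add_le hT hO hc S t)

theorem ascVal_le_covEnt (hT : Continuous T) (hO : ∀ A ∈ U, IsOpen A)
    (hc : ⋃₀ U = Set.univ) : ascVal T U ≤ covEnt T U :=
  (isShiftSubadditive_logCoverNJoin hT hO hc).ascOf_le_entropyOf

theorem logCoverNJoin_coverJoin_range (hT : Continuous T) (hO : ∀ A ∈ U, IsOpen A)
    (hc : ⋃₀ U = Set.univ) (k : ℕ) :
    logCoverNJoin T (coverJoin T U (range k)) = thicken (logCoverNJoin T U) k := by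
  ext S
  simp only [logCoverNJoin, thicken, coverN_coverJoin_coverJoin_range hT hO hc]

/-- The witness is the refined cover `𝒰_{[0,k)}` with `k > 3 log N(𝒰) / ε`. -/
theorem exists_cover_covEnt_sub_le_ascVal (hT : Continuous T) (hU : U.Finite)
    (hO : ∀ A ∈ U, IsOpen A) (hc : ⋃₀ U = Set.univ) {ε : ℝ} (hε : 0 < ε) :
    ∃ U' : Set (Set X), (U'.Finite ∧ (∀ A ∈ U', IsOpen A) ∧ ⋃₀ U' = Set.univ) ∧
      covEnt T U - ε ≤ ascVal T U' ∧ covEnt T U' ≤ covEnt T U := by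
  have hφ := isShiftSubadditive_logCoverNJoin hT hO hc
  set L := logCoverNJoin T U {0}
  obtain ⟨k, hk⟩ := exists_nat_gt (3 * L / ε)
  have hk0 : 0 < k := by
    exact_mod_cast (div_nonneg (by linarith [hφ.nonneg {0}]) hε.le).trans_lt hk
  refine ⟨coverJoin T U (range k), ⟨coverJoin_finite hU _, isOpen_of_mem_coverJoin hT hO,
    sUnion_coverJoin hc _⟩, ?_, ?_⟩
  · rw [covEnt_eq_entropyOf, ascVal_eq_ascOf, logCoverNJoin_coverJoin_range hT hO hc]
    have : 3 * L / k ≤ ε :=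
      (div_le_iff₀ (by exact_mod_cast hk0)).2 (by linarith [(div_lt_iff₀ hε).1 hk])
    linarith [hφ.entropyOf_sub_le_ascOf_thicken hk0]
  · rw [covEnt_eq_entropyOf, covEnt_eq_entropyOf, logCoverNJoin_coverJoin_range hT hO hc]
    exact hφ.entropyOf_thicken_le k

end LogCoverNJoin

/-- With `c_S^n = 2^{-n}`, the supremum over finite open covers of the
topological average sample complexity equals the (Adler–Konheim–McAndrew) topological
entropy `h_top(X,T) = sup_𝒰 h_top(X,𝒰,T)`, and likewise for the topological
intricacy `Int(X,𝒰,T) = 2·Asc(X,𝒰,T) − h_top(X,𝒰,T)`. -/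
theorem sup_asc_eq_topEntropy {X : Type*} [TopologicalSpace X] [CompactSpace X]
    (T : X → X) (hT : Continuous T) :
    (⨆ U : {U : Set (Set X) // U.Finite ∧ (∀ A ∈ U, IsOpen A) ∧ ⋃₀ U = Set.univ},
        ascVal T U.1)
      = (⨆ U : {U : Set (Set X) // U.Finite ∧ (∀ A ∈ U, IsOpen A) ∧ ⋃₀ U = Set.univ},
        covEnt T U.1) ∧
    (⨆ U : {U : Set (Set X) // U.Finite ∧ (∀ A ∈ U, IsOpen A) ∧ ⋃₀ U = Set.univ},
        (2 * ascVal T U.1 - covEnt T U.1))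
      = (⨆ U : {U : Set (Set X) // U.Finite ∧ (∀ A ∈ U, IsOpen A) ∧ ⋃₀ U = Set.univ},
        covEnt T U.1) := by
  have : Nonempty
      {U : Set (Set X) // U.Finite ∧ (∀ A ∈ U, IsOpen A) ∧ ⋃₀ U = Set.univ} :=
    ⟨⟨{Set.univ}, Set.finite_singleton _, by simp, Set.sUnion_singleton _⟩⟩
  constructor
  · refine iSup_eq_iSup_of_le_of_forall_sub_le (fun U => ascVal_le_covEnt hT U.2.2.1 U.2.2.2)
      fun U ε hε => ?_
    obtain ⟨U', hU', hasc, -⟩ :=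
      exists_cover_covEnt_sub_le_ascVal hT U.2.1 U.2.2.1 U.2.2.2 hε
    exact ⟨⟨U', hU'⟩, hasc⟩
  · refine iSup_eq_iSup_of_le_of_forall_sub_le
      (fun U => by linarith [ascVal_le_covEnt hT U.2.2.1 U.2.2.2]) fun U ε hε => ?_
    obtain ⟨U', hU', hasc, hent⟩ :=
      exists_cover_covEnt_sub_le_ascVal hT U.2.1 U.2.2.1 U.2.2.2 (half_pos hε)
    exact ⟨⟨U', hU'⟩, by linarith⟩
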